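/- arXiv:1902.00959 — 4 statements merged into one kernel-verified Lean document; each statement's English description precedes it below -/
import Mathlib

section
/- If T = S² + S* where S is the unilateral shift on ℓ²(ℕ), then [T*, T] = e₁ ⊗ e₁. In particular T is hyponormal with rank-one self-commutator. -/
/-!
Only `S* S = 1` is needed to expand the commutator: with `T = S² + S*` the cross terms cancel
and `T* T - T T* = S S* - S² S*² = S (1 - S S*) S*`. For the shift, `1 - S S*` is the rank-one
projection onto `e₀`, and conjugating it by `S` gives the projection onto `S e₀ = e₁`.
-/

open ContinuousLinearMap InnerProductSpace

theorem star_mul_self_sub_mul_star_sq_add_star {R : Type*} [Ring R] [StarRing R] {s : R}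
    (hs : star s * s = 1) :
    star (s ^ 2 + star s) * (s ^ 2 + star s) - (s ^ 2 + star s) * star (s ^ 2 + star s) =
      s * (1 - s * star s) * star s := by
  rw [← sub_eq_zero]
  simp only [star_add, star_pow, star_star]
  calc _ = star s * (star s * s - 1) * s := by noncomm_ring
    _ = 0 := by rw [hs, sub_self, mul_zero, zero_mul]

theorem comp_rankOne_comp_adjoint {𝕜 E F G K : Type*} [RCLike 𝕜]
    [NormedAddCommGroup E] [InnerProductSpace 𝕜 E] [NormedAddCommGroup F] [InnerProductSpace 𝕜 F]
    [NormedAddCommGroup G] [InnerProductSpace 𝕜 G] [CompleteSpace G]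
    [NormedAddCommGroup K] [InnerProductSpace 𝕜 K] [CompleteSpace K]
    (A : E →L[𝕜] F) (B : G →L[𝕜] K) (x : E) (y : G) :
    (A ∘L rankOne 𝕜 x y) ∘L adjoint B = rankOne 𝕜 (A x) (B y) := by
  rw [comp_rankOne, rankOne_comp, adjoint_adjoint]

namespace HilbertBasis

variable {ι 𝕜 E : Type*} [RCLike 𝕜] [NormedAddCommGroup E] [InnerProductSpace 𝕜 E]

theorem ext_inner (b : HilbertBasis ι 𝕜 E) {x y : E}
    (h : ∀ i, inner 𝕜 (b i) x = inner 𝕜 (b i) y) : x = y :=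
  b.repr.injective <| lp.ext <| funext fun i => by simp only [b.repr_apply_apply, h]

theorem ext_continuousLinearMap {F : Type*} [NormedAddCommGroup F] [NormedSpace 𝕜 F]
    (b : HilbertBasis ι 𝕜 E) {A B : E →L[𝕜] F} (h : ∀ i, A (b i) = B (b i)) : A = B :=
  ext_on (Submodule.dense_iff_topologicalClosure_eq_top.2 b.dense_span) (Set.forall_mem_range.2 h)

variable [CompleteSpace E] (e : HilbertBasis ℕ 𝕜 E) {S : E →L[𝕜] E}

theorem adjoint_shift_apply_zero (hS : ∀ n, S (e n) = e (n + 1)) : adjoint S (e 0) = 0 :=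
  e.ext_inner fun i => by
    rw [adjoint_inner_right, hS, inner_zero_right, orthonormal_iff_ite.1 e.orthonormal,
      if_neg i.succ_ne_zero]

theorem adjoint_shift_apply_succ (hS : ∀ n, S (e n) = e (n + 1)) (n : ℕ) :
    adjoint S (e (n + 1)) = e n :=
  e.ext_inner fun i => by
    simp only [adjoint_inner_right, hS, orthonormal_iff_ite.1 e.orthonormal, Nat.succ_inj]

theorem adjoint_shift_mul_shift (hS : ∀ n, S (e n) = e (n + 1)) : adjoint S * S = 1 :=
  e.ext_continuousLinearMap fun n => by
    rw [mul_apply_eq_comp, hS, e.adjoint_shift_apply_succ hS, one_apply_eq_self]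

theorem one_sub_shift_mul_adjoint_shift (hS : ∀ n, S (e n) = e (n + 1)) :
    1 - S * adjoint S = rankOne 𝕜 (e 0) (e 0) :=
  e.ext_continuousLinearMap fun n => by
    cases n with
    | zero => simp [e.adjoint_shift_apply_zero hS, e.orthonormal.1 0]
    | succ n => simp [e.adjoint_shift_apply_succ hS, hS, orthonormal_iff_ite.1 e.orthonormal]

end HilbertBasis

/-- For `T = S² + S*` with `S` the unilateral shift, `[T*, T] = e₁ ⊗ e₁`;
in particular `T` is hyponormal with rank-one self-commutator. -/
theorem toeplitz_self_commutator
    {H : Type*} [NormedAddCommGroup H] [InnerProductSpace ℂ H] [CompleteSpace H]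
    (e : HilbertBasis ℕ ℂ H) (S T : H →L[ℂ] H)
    (hS : ∀ n : ℕ, S (e n) = e (n + 1))
    (hT : T = S ^ 2 + adjoint S) :
    adjoint T * T - T * adjoint T = (innerSL ℂ (e 1)).smulRight (e 1) ∧
      (adjoint T * T - T * adjoint T).IsPositive := by
  have hcomm : adjoint T * T - T * adjoint T = rankOne ℂ (e 1) (e 1) := by
    have hiso := e.adjoint_shift_mul_shift hS
    rw [← star_eq_adjoint] at hiso hT
    rw [← star_eq_adjoint, hT, star_mul_self_sub_mul_star_sq_add_star hiso, star_eq_adjoint,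
      e.one_sub_shift_mul_adjoint_shift hS, mul_def, mul_def, comp_rankOne_comp_adjoint, hS]
  exact ⟨hcomm, hcomm ▸ isPositive_rankOne_self (e 1)⟩
end

section
/- Let T be a bounded operator on a Hilbert space H with [T*, T] = ξ ⊗ ξ for some vector ξ. If Tξ = aξ + bT*ξ for scalars a, b, then for every k ≥ 0, T maps the subspace H_k = span{ξ, T*ξ, ..., T*^k ξ} into H_{k+1}. -/
open ContinuousLinearMap

/-! Since `[T*, T]` has range in `ℂ ξ`, so does `[T, T*]`, hence
`T (T*^(i+1) ξ) ∈ T* (T (T*^i ξ)) + ℂ ξ`; by induction on `i` this lies in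
`T* H_(i+1) + ℂ ξ ⊆ H_(i+2)`, the base case `T ξ ∈ H_1` being the hypothesis on `T ξ`. -/

namespace Module.End

variable {R M : Type*} [Ring R] [AddCommGroup M] [Module R M]

/-- The paper's `H_k` for `A = T*`; in the usual indexing of Krylov spaces this is `𝒦_(k+1)(A, ξ)`. -/
def krylovSpan (A : Module.End R M) (ξ : M) (k : ℕ) : Submodule R M :=
  Submodule.span R {v | ∃ i ≤ k, v = (A ^ i) ξ}

variable {A T : Module.End R M} {ξ : M}

theorem pow_apply_mem_krylovSpan {i k : ℕ} (h : i ≤ k) : (A ^ i) ξ ∈ krylovSpan A ξ k :=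
  Submodule.subset_span ⟨i, h, rfl⟩

theorem self_mem_krylovSpan (k : ℕ) : ξ ∈ krylovSpan A ξ k := by
  simpa using pow_apply_mem_krylovSpan (A := A) (ξ := ξ) (Nat.zero_le k)

theorem apply_mem_krylovSpan (k : ℕ) : A ξ ∈ krylovSpan A ξ (k + 1) := by
  simpa using pow_apply_mem_krylovSpan (A := A) (ξ := ξ) (Nat.le_add_left 1 k)

theorem krylovSpan_mono {k l : ℕ} (h : k ≤ l) : krylovSpan A ξ k ≤ krylovSpan A ξ l :=
  Submodule.span_mono fun _ ⟨i, hi, hv⟩ => ⟨i, hi.trans h, hv⟩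

theorem krylovSpan_le_comap_of_forall {N : Submodule R M} {k : ℕ}
    (h : ∀ i ≤ k, T ((A ^ i) ξ) ∈ N) : krylovSpan A ξ k ≤ N.comap T := by
  rw [krylovSpan, Submodule.span_le]
  rintro _ ⟨i, hi, rfl⟩
  exact h i hi

theorem krylovSpan_le_comap_self (k : ℕ) :
    krylovSpan A ξ k ≤ (krylovSpan A ξ (k + 1)).comap A :=
  krylovSpan_le_comap_of_forall fun i hi => by
    rw [← mul_apply, ← pow_succ']
    exact pow_apply_mem_krylovSpan (by omega)

theorem apply_pow_apply_mem_krylovSpan (hξ : T ξ ∈ krylovSpan A ξ 1)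
    (hcomm : LinearMap.range (T * A - A * T) ≤ R ∙ ξ) (i : ℕ) :
    T ((A ^ i) ξ) ∈ krylovSpan A ξ (i + 1) := by
  induction i with
  | zero => simpa using hξ
  | succ i ih =>
    obtain ⟨c, hc⟩ :=
      Submodule.mem_span_singleton.mp (hcomm (LinearMap.mem_range_self _ ((A ^ i) ξ)))
    have hstep : T ((A ^ (i + 1)) ξ) = A (T ((A ^ i) ξ)) + c • ξ := by
      rw [hc, pow_succ', mul_apply, LinearMap.sub_apply, mul_apply, mul_apply]
      abel
    rw [hstep]
    exact add_mem (krylovSpan_le_comap_self _ ih)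
      (Submodule.smul_mem _ c (self_mem_krylovSpan _))

theorem krylovSpan_le_comap (hξ : T ξ ∈ krylovSpan A ξ 1)
    (hcomm : LinearMap.range (T * A - A * T) ≤ R ∙ ξ) (k : ℕ) :
    krylovSpan A ξ k ≤ (krylovSpan A ξ (k + 1)).comap T :=
  krylovSpan_le_comap_of_forall fun i hi =>
    krylovSpan_mono (by omega) (apply_pow_apply_mem_krylovSpan hξ hcomm i)

end Module.End

open Module.End

theorem krylovSpan_toLinearMap {R M : Type*} [Ring R] [AddCommGroup M] [TopologicalSpace M]
    [Module R M] (A : M →L[R] M) (ξ : M) (k : ℕ) :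
    krylovSpan (A : Module.End R M) ξ k = Submodule.span R {v | ∃ i ≤ k, v = (A ^ i) ξ} := by
  simp only [krylovSpan, ← toLinearMap_pow, coe_coe]

theorem range_commutator_adjoint_le_span {𝕜 H : Type*} [RCLike 𝕜] [NormedAddCommGroup H]
    [InnerProductSpace 𝕜 H] [CompleteSpace H] {T : H →L[𝕜] H} {ξ : H}
    (hcomm : adjoint T * T - T * adjoint T = (innerSL 𝕜 ξ).smulRight ξ) :
    LinearMap.range ((T : Module.End 𝕜 H) * (adjoint T : Module.End 𝕜 H) -
      (adjoint T : Module.End 𝕜 H) * (T : Module.End 𝕜 H)) ≤ 𝕜 ∙ ξ := by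
  rintro _ ⟨x, rfl⟩
  have hx := congrArg (fun S : H →L[𝕜] H => S x) hcomm
  simp only [sub_apply, mul_apply_eq_comp, smulRight_apply, innerSL_apply_apply] at hx
  refine Submodule.mem_span_singleton.mpr ⟨-inner 𝕜 ξ x, ?_⟩
  simp only [LinearMap.sub_apply, Module.End.mul_apply, coe_coe, neg_smul, ← hx]
  abel

/-- If `[T*,T] = ξ ⊗ ξ` and `Tξ = aξ + bT*ξ`, then `T` maps
`H_k = span{ξ, T*ξ, …, T*^k ξ}` into `H_{k+1}`. -/
theorem maps_Hk_into_Hk_succ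
    {H : Type*} [NormedAddCommGroup H] [InnerProductSpace ℂ H] [CompleteSpace H]
    (T : H →L[ℂ] H) (ξ : H)
    (hcomm : adjoint T * T - T * adjoint T = (innerSL ℂ ξ).smulRight ξ)
    (a b : ℂ) (hTξ : T ξ = a • ξ + b • adjoint T ξ) (k : ℕ) :
    ∀ x ∈ Submodule.span ℂ {v | ∃ i ≤ k, v = (adjoint T ^ i) ξ},
      T x ∈ Submodule.span ℂ {v | ∃ i ≤ k + 1, v = (adjoint T ^ i) ξ} := by
  have hξ : (T : Module.End ℂ H) ξ ∈ krylovSpan (adjoint T : Module.End ℂ H) ξ 1 := by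
    rw [coe_coe, hTξ]
    exact add_mem (Submodule.smul_mem _ a (self_mem_krylovSpan 1))
      (Submodule.smul_mem _ b (apply_mem_krylovSpan 0))
  rw [← krylovSpan_toLinearMap, ← krylovSpan_toLinearMap]
  exact fun x hx => krylovSpan_le_comap hξ (range_commutator_adjoint_le_span hcomm) k hx
end

section
/- Let T be a bounded operator with [T*,T] = ξ ⊗ ξ, and suppose Tξ = Q(T*)ξ for some polynomial Q. Then the subspace H_pol = closure of span{T*^k ξ : k ≥ 0} is invariant under both T and T*. -/
/-!
`H_pol` is the closure of the cyclic subspace `P = span {T*^k ξ}`, which is `T*`-invariant by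
construction. It is also `T`-invariant: `T ξ = Q(T*) ξ ∈ P`, and the commutation relation
`T T* v = T* T v - ⟪ξ, v⟫ ξ` propagates this from `T*^k ξ` to `T*^(k+1) ξ`, as `ξ ∈ P`.
Invariance under a bounded operator passes to the closure.
-/

open ContinuousLinearMap Module.End Submodule

namespace ContinuousLinearMap

variable {R M : Type*} [TopologicalSpace M]

theorem span_range_pow_apply_mem_invtSubmodule [Semiring R] [AddCommMonoid M] [Module R M]
    (A : M →L[R] M) (x : M) :
    span R (Set.range fun k : ℕ => (A ^ k) x) ∈ invtSubmodule (A : M →ₗ[R] M) := by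
  rw [mem_invtSubmodule, span_le]
  rintro _ ⟨k, rfl⟩
  exact subset_span ⟨k + 1, by simp only [pow_succ', mul_apply_eq_comp, coe_coe]⟩

theorem aeval_apply_mem_span_range_pow_apply [CommSemiring R] [AddCommGroup M] [Module R M]
    [IsTopologicalAddGroup M] [ContinuousConstSMul R M] (A : M →L[R] M) (x : M)
    (q : Polynomial R) :
    Polynomial.aeval A q x ∈ span R (Set.range fun k : ℕ => (A ^ k) x) := by
  rw [Polynomial.aeval_eq_sum_range, sum_apply]
  exact sum_mem fun i _ => by
    rw [smul_apply]
    exact smul_mem _ _ (subset_span ⟨i, rfl⟩)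

theorem span_range_pow_apply_mem_invtSubmodule_of_sub_mem [Ring R] [AddCommGroup M] [Module R M]
    (A B : M →L[R] M) (x : M)
    (hBx : B x ∈ span R (Set.range fun k : ℕ => (A ^ k) x))
    (hcomm : ∀ v ∈ span R (Set.range fun k : ℕ => (A ^ k) x),
      B (A v) - A (B v) ∈ span R (Set.range fun k : ℕ => (A ^ k) x)) :
    span R (Set.range fun k : ℕ => (A ^ k) x) ∈ invtSubmodule (B : M →ₗ[R] M) := by
  rw [mem_invtSubmodule, span_le]
  rintro _ ⟨k, rfl⟩
  induction k with
  | zero => simpa using hBx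
  | succ k ih =>
    have hk : (A ^ k) x ∈ span R (Set.range fun k : ℕ => (A ^ k) x) := subset_span ⟨k, rfl⟩
    simp only [SetLike.mem_coe, mem_comap, coe_coe, pow_succ', mul_apply_eq_comp] at ih ⊢
    rw [← add_sub_cancel (A (B ((A ^ k) x))) (B (A ((A ^ k) x)))]
    exact add_mem (span_range_pow_apply_mem_invtSubmodule A x ih) (hcomm _ hk)

end ContinuousLinearMap

/-- If `[T*,T] = ξ ⊗ ξ` and `Tξ = Q(T*)ξ` for a polynomial `Q`, then the closed
span of `{T*^k ξ : k ≥ 0}` is invariant under both `T` and `T*`. -/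
theorem Hpol_invariant
    {H : Type*} [NormedAddCommGroup H] [InnerProductSpace ℂ H] [CompleteSpace H]
    (T : H →L[ℂ] H) (ξ : H)
    (hcomm : adjoint T * T - T * adjoint T = (innerSL ℂ ξ).smulRight ξ)
    (Q : Polynomial ℂ) (hTξ : T ξ = (Polynomial.aeval (adjoint T) Q) ξ) :
    ∀ x ∈ (Submodule.span ℂ
        (Set.range fun k : ℕ => (adjoint T ^ k) ξ)).topologicalClosure,
      T x ∈ (Submodule.span ℂ
          (Set.range fun k : ℕ => (adjoint T ^ k) ξ)).topologicalClosure ∧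
        adjoint T x ∈ (Submodule.span ℂ
          (Set.range fun k : ℕ => (adjoint T ^ k) ξ)).topologicalClosure := by
  set P := span ℂ (Set.range fun k : ℕ => (adjoint T ^ k) ξ)
  have hξ : ξ ∈ P := subset_span ⟨0, by simp⟩
  have hT_comm (v : H) : T (adjoint T v) - adjoint T (T v) = -(inner ℂ ξ v • ξ) := by
    have h := DFunLike.congr_fun hcomm v
    rw [sub_apply, mul_apply_eq_comp, mul_apply_eq_comp] at h
    rw [← neg_sub, h]
    rfl
  have hT : P ∈ invtSubmodule (T : H →ₗ[ℂ] H) :=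
    span_range_pow_apply_mem_invtSubmodule_of_sub_mem _ T _
      (hTξ ▸ aeval_apply_mem_span_range_pow_apply _ _ Q)
      fun v _ => hT_comm v ▸ neg_mem (smul_mem _ _ hξ)
  have hA : P ∈ invtSubmodule (adjoint T : H →ₗ[ℂ] H) :=
    span_range_pow_apply_mem_invtSubmodule _ _
  exact fun x hx => ⟨P.topologicalClosure_mem_invtSubmodule hT hx,
    P.topologicalClosure_mem_invtSubmodule hA hx⟩
end

section
/- Let T be a bounded operator with [T*, T] = ξ ⊗ ξ and Tξ = Σ_{k=0}^d q_k T*^k ξ. With b_{j,k} = ⟨T*^k ξ, T*^j ξ⟩, for all m ≥ 0 and n ≥ 1 one has b_{m+1,n} = Σ_{k=0}^d q_k b_{m,k+n} - Σ_{j=0}^{n-1} b_{m,j} · b_{0,n-j-1}. -/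
/-!
Write `A = T*`. Expanding the commutator of `T` with `Aⁿ` telescopically gives
`T Aⁿ = Aⁿ T - Σ_{j<n} Aʲ [A, T] Aⁿ⁻¹⁻ʲ`, and `[A, T] = ξ ⊗ ξ`. Applying this to `ξ`, substituting
the relation for `Tξ`, and pairing with `Aᵐξ` (moving one `A` across as `T`) gives the recursion.
-/

open ContinuousLinearMap

theorem mul_pow_eq_pow_mul_sub_sum {R : Type*} [Ring R] (a b : R) (n : ℕ) :
    b * a ^ n = a ^ n * b - ∑ j ∈ Finset.range n, a ^ j * (a * b - b * a) * a ^ (n - j - 1) := by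
  induction n with
  | zero => simp
  | succ n ih =>
    have hshift : ∀ j ∈ Finset.range n,
        a ^ j * (a * b - b * a) * a ^ (n + 1 - j - 1) =
          a ^ j * (a * b - b * a) * a ^ (n - j - 1) * a := by
      intro j hj
      rw [mul_assoc _ _ a, ← pow_succ]
      congr 2
      have := Finset.mem_range.mp hj
      omega
    rw [Finset.sum_range_succ, Finset.sum_congr rfl hshift, ← Finset.sum_mul,
      pow_succ, ← mul_assoc, ih, Nat.add_sub_cancel_left, Nat.sub_self, pow_zero]
    noncomm_ring

theorem apply_adjoint_pow_apply_of_commutator_eq_rankOne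
    {H : Type*} [NormedAddCommGroup H] [InnerProductSpace ℂ H] [CompleteSpace H]
    {T : H →L[ℂ] H} {ξ : H}
    (hcomm : adjoint T * T - T * adjoint T = (innerSL ℂ ξ).smulRight ξ) (n : ℕ) (x : H) :
    T ((adjoint T ^ n) x) = (adjoint T ^ n) (T x) -
      ∑ j ∈ Finset.range n, (inner ℂ ξ ((adjoint T ^ (n - j - 1)) x) : ℂ) • (adjoint T ^ j) ξ := by
  have h := congrArg (fun S : H →L[ℂ] H => S x) (mul_pow_eq_pow_mul_sub_sum (adjoint T) T n)
  simpa only [hcomm, sub_apply, sum_apply, mul_apply_eq_comp, smulRight_apply, innerSL_apply_apply,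
    map_smul] using h

/-- If `[T*,T] = ξ ⊗ ξ` and `Tξ = Σ_{k≤d} q_k T*^k ξ`, then with
`b_{j,k} = ⟨T*^k ξ, T*^j ξ⟩` (linear in the first slot, so `b j k = inner (T*^j ξ) (T*^k ξ)`
in Mathlib's convention), for all `m ≥ 0` and `n ≥ 1`:
`b_{m+1,n} = Σ_{k≤d} q_k b_{m,k+n} - Σ_{j<n} b_{m,j} b_{0,n-j-1}`. -/
theorem all_columns_recursion
    {H : Type*} [NormedAddCommGroup H] [InnerProductSpace ℂ H] [CompleteSpace H]
    (T : H →L[ℂ] H) (ξ : H)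
    (hcomm : adjoint T * T - T * adjoint T = (innerSL ℂ ξ).smulRight ξ)
    (d : ℕ) (q : ℕ → ℂ)
    (hTξ : T ξ = ∑ k ∈ Finset.range (d + 1), q k • (adjoint T ^ k) ξ) :
    ∀ m n : ℕ, 1 ≤ n →
      (inner ℂ ((adjoint T ^ (m + 1)) ξ) ((adjoint T ^ n) ξ) : ℂ) =
        ∑ k ∈ Finset.range (d + 1),
            q k * (inner ℂ ((adjoint T ^ m) ξ) ((adjoint T ^ (k + n)) ξ) : ℂ) -
          ∑ j ∈ Finset.range n,
            (inner ℂ ((adjoint T ^ m) ξ) ((adjoint T ^ j) ξ) : ℂ) *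
              (inner ℂ ξ ((adjoint T ^ (n - j - 1)) ξ) : ℂ) := by
  intro m n _
  rw [pow_succ', mul_apply_eq_comp, adjoint_inner_left,
    apply_adjoint_pow_apply_of_commutator_eq_rankOne hcomm, hTξ, inner_sub_right]
  simp only [map_sum, map_smul, ← mul_apply_eq_comp, ← pow_add, Nat.add_comm n, inner_sum,
    inner_smul_right, mul_comm]
end
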